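/- For all p ≥ 1 and k ≥ 2, the finite-path thresholds λ_{p,k} for the shift graph G_k (the supremum over measurable g : [0,1]^{k−1} → {0,…,p−1} of the measure of {x ∈ [0,1]^k : g(x₁,…,x_{k−1}) > g(x₂,…,x_k)}) form a nondecreasing sequence in p with lim_{p→∞} λ_{p,k} = 1 − 1/k. -/

import Mathlib

open MeasureTheory unitInterval ENNReal Filter Set
open scoped Classical NNReal

noncomputable def fm (m : ℕ) (t : I) : Fin (m+1) := ⟨min (⌊(t:ℝ) * (m+1)⌋₊) m, by omega⟩

lemma fm_mono (m : ℕ) : Monotone (fm m) := by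
  intro a b hab
  simp only [fm, Fin.mk_le_mk]
  have hab' : (a:ℝ) ≤ (b:ℝ) := hab
  have : (a:ℝ) * (m+1) ≤ (b:ℝ) * (m+1) := by
    apply mul_le_mul_of_nonneg_right hab' (by positivity)
  exact min_le_min (Nat.floor_le_floor this) le_rfl

lemma image_fm (m : ℕ) (s : Fin (m+1)) :
    Ico ((s:ℝ)/(m+1)) ((s+1:ℕ)/(m+1)) ⊆ Subtype.val '' (fm m ⁻¹' {s}) ∧
    Subtype.val '' (fm m ⁻¹' {s}) ⊆ Icc ((s:ℝ)/(m+1)) ((s+1:ℕ)/(m+1)) := by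
  have hm1 : (0:ℝ) < m + 1 := by positivity
  constructor
  · rintro t ⟨h1, h2⟩
    have hs1 : (s:ℕ) + 1 ≤ m + 1 := s.2
    have ht : t ∈ Icc (0:ℝ) 1 := by
      constructor
      · exact le_trans (by positivity) h1
      · refine le_trans h2.le ?_
        rw [div_le_one hm1]
        exact_mod_cast Nat.cast_le.mpr hs1
    refine ⟨⟨t, ht⟩, ?_, rfl⟩
    have hfl : ⌊t * (m+1)⌋₊ = s := by
      rw [Nat.floor_eq_iff (by nlinarith [ht.1])]
      rw [div_le_iff₀ hm1] at h1
      rw [lt_div_iff₀ hm1] at h2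
      constructor
      · linarith
      · push_cast at h2 ⊢; linarith
    simp only [mem_preimage, mem_singleton_iff, fm]
    ext
    simp [hfl, Nat.lt_succ_iff.mp s.2]
  · rintro t ⟨⟨u, hu⟩, hmem, rfl⟩
    simp only [mem_preimage, mem_singleton_iff, fm, Fin.ext_iff] at hmem
    have hu0 : (0:ℝ) ≤ u := hu.1
    have hu1 : u ≤ 1 := hu.2
    rcases le_or_gt (⌊u * (m+1)⌋₊) m with h | h
    · rw [min_eq_left h] at hmem
      have h1 : (s:ℝ) ≤ u * (m+1) := by
        rw [← hmem]; exact_mod_cast Nat.floor_le (by positivity)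
      have h2 : u * (m+1) < (s:ℝ) + 1 := by
        rw [← hmem]
        have := Nat.lt_floor_add_one (u * (m+1))
        push_cast
        exact_mod_cast this
      constructor
      · rw [div_le_iff₀ hm1]; linarith
      · rw [le_div_iff₀ hm1]; push_cast; linarith
    · rw [min_eq_right h.le] at hmem
      have hfl : (⌊u * (m+1)⌋₊ : ℝ) ≤ u * (m+1) := Nat.floor_le (by positivity)
      have hmu : (m:ℝ) + 1 ≤ u * (m+1) := by
        have h2 : ((m+1 : ℕ):ℝ) ≤ (⌊u * (m+1)⌋₊:ℝ) := by exact_mod_cast h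
        push_cast at h2; linarith
      have hu1' : u = 1 := by nlinarith
      subst hu1'
      rw [← hmem]
      constructor
      · rw [div_le_iff₀ hm1]; push_cast; nlinarith
      · rw [le_div_iff₀ hm1]; push_cast; nlinarith


lemma measurable_fm (m : ℕ) : Measurable (fm m) := by
  have h1 : Measurable fun t : I => ⌊(t:ℝ) * (m+1)⌋₊ :=
    (measurable_subtype_coe.mul_const _).nat_floor
  exact (Measurable.of_discrete (f := fun n : ℕ => (⟨min n m, by omega⟩ : Fin (m+1)))).comp h1


lemma vol_fm (m : ℕ) (s : Fin (m+1)) :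
    volume (fm m ⁻¹' {s}) = ((m+1 : ℕ) : ℝ≥0∞)⁻¹ := by
  obtain ⟨hsub, hsup⟩ := image_fm m s
  have hemb : MeasurableEmbedding (Subtype.val : I → ℝ) :=
    MeasurableEmbedding.subtype_coe measurableSet_Icc
  have hv : (volume : Measure I) (fm m ⁻¹' {s}) = volume (Subtype.val '' (fm m ⁻¹' {s})) := by
    rw [unitInterval.volume_def, hemb.comap_apply]
  have key : (ENNReal.ofReal ((s+1:ℕ)/(m+1) - (s:ℝ)/(m+1))) = ((m+1 : ℕ) : ℝ≥0∞)⁻¹ := by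
    have : ((s+1:ℕ):ℝ)/(m+1) - (s:ℝ)/(m+1) = ((m+1:ℝ))⁻¹ := by
      push_cast; field_simp; ring
    rw [this, ENNReal.ofReal_inv_of_pos (by positivity), ← ENNReal.ofReal_natCast (m+1)]
    push_cast
    ring_nf
  rw [hv]
  apply le_antisymm
  · calc volume (Subtype.val '' (fm m ⁻¹' {s})) ≤ volume (Icc ((s:ℝ)/(m+1)) ((s+1:ℕ)/(m+1))) :=
          measure_mono hsup
      _ = _ := by rw [Real.volume_Icc, key]
  · calc ((m+1 : ℕ) : ℝ≥0∞)⁻¹ = volume (Ico ((s:ℝ)/(m+1)) ((s+1:ℕ)/(m+1))) := by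
          rw [Real.volume_Ico, key]
      _ ≤ _ := measure_mono hsub

lemma vol_perm (k : ℕ) (A : Set (Fin k → I)) (hA : MeasurableSet A) (e : Fin k ≃ Fin k) :
    volume ((fun x : Fin k → I => fun i => x (e i)) ⁻¹' A) = volume A := by
  have h := (volume_measurePreserving_piCongrLeft (fun _ : Fin k => I) e.symm)
  have h2 := h.measure_preimage hA.nullMeasurableSet
  have h3 : ⇑(MeasurableEquiv.piCongrLeft (fun _ : Fin k => ↑I) e.symm)
      = fun x : Fin k → I => fun i => x (e i) := by
    funext x
    ext i
    simp [MeasurableEquiv.piCongrLeft, Equiv.piCongrLeft_apply_eq_cast]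
  rwa [h3] at h2

lemma measurable_finset_inf' (n : ℕ) (s : Finset (Fin n)) (h : s.Nonempty) :
    Measurable (fun y : Fin n → I => s.inf' h y) := by
  induction h using Finset.Nonempty.cons_induction with
  | singleton a => simpa using measurable_pi_apply a
  | cons a s ha hs ih =>
    have : (fun y : Fin n → I => (Finset.cons a s ha).inf' (Finset.cons_nonempty ha) y)
        = fun y => min (y a) (s.inf' hs y) := by
      funext y; rw [Finset.inf'_cons]
    rw [this]
    exact Measurable.min (measurable_pi_apply a) ih

noncomputable def s19amin {n : ℕ} (hn : 0 < n) (y : Fin n → I) : Fin n :=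
  (Finset.univ.filter fun j => ∀ i, y j ≤ y i).min' (by
    obtain ⟨j, -, hj⟩ := Finset.exists_min_image Finset.univ y ⟨⟨0, hn⟩, Finset.mem_univ _⟩
    exact ⟨j, Finset.mem_filter.2 ⟨Finset.mem_univ _, fun i => hj i (Finset.mem_univ _)⟩⟩)

lemma s19amin_le {n : ℕ} (hn : 0 < n) (y : Fin n → I) (i : Fin n) : y (s19amin hn y) ≤ y i := by
  have := Finset.min'_mem (Finset.univ.filter fun j => ∀ i, y j ≤ y i) (by
    obtain ⟨j, -, hj⟩ := Finset.exists_min_image Finset.univ y ⟨⟨0, hn⟩, Finset.mem_univ _⟩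
    exact ⟨j, Finset.mem_filter.2 ⟨Finset.mem_univ _, fun i => hj i (Finset.mem_univ _)⟩⟩)
  exact (Finset.mem_filter.1 this).2 i

lemma s19amin_eq {n : ℕ} (hn : 0 < n) (y : Fin n → I) (j : Fin n)
    (huniq : ∀ i, i ≠ j → y j < y i) : s19amin hn y = j := by
  by_contra hne
  exact absurd (s19amin_le hn y j) (not_le.2 (huniq _ hne))

lemma s19amin_eq_iff {n : ℕ} (hn : 0 < n) (y : Fin n → I) (j : Fin n) :
    s19amin hn y = j ↔ ((∀ i, y j ≤ y i) ∧ ∀ j', (∀ i, y j' ≤ y i) → j ≤ j') := by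
  constructor
  · rintro rfl
    refine ⟨s19amin_le hn y, fun j' hj' => ?_⟩
    exact Finset.min'_le _ _ (Finset.mem_filter.2 ⟨Finset.mem_univ _, hj'⟩)
  · rintro ⟨h1, h2⟩
    apply le_antisymm
    · exact Finset.min'_le _ _ (Finset.mem_filter.2 ⟨Finset.mem_univ _, h1⟩)
    · exact h2 _ (s19amin_le hn y)

lemma s19measurable_amin {n : ℕ} (hn : 0 < n) : Measurable (s19amin hn) := by
  apply measurable_to_countable'
  intro j
  have : (s19amin hn) ⁻¹' {j} = ((⋂ i, {y : Fin n → I | y j ≤ y i}) ∩ ⋂ j', {y : Fin n → I | (∀ i, y j' ≤ y i) → j ≤ j'}) := by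
    ext y
    simp only [mem_preimage, mem_singleton_iff, s19amin_eq_iff hn, mem_inter_iff, mem_iInter,
      mem_setOf_eq]
  rw [this]
  apply MeasurableSet.inter
  · exact MeasurableSet.iInter fun i =>
      measurableSet_le (measurable_pi_apply _) (measurable_pi_apply _)
  · refine MeasurableSet.iInter fun j' => ?_
    by_cases h : j ≤ j'
    · have : {y : Fin n → I | (∀ i, y j' ≤ y i) → j ≤ j'} = univ := by
        ext y; simp [h]
      rw [this]; exact MeasurableSet.univ
    · have : {y : Fin n → I | (∀ i, y j' ≤ y i) → j ≤ j'} = (⋂ i, {y : Fin n → I | y j' ≤ y i})ᶜ := by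
        ext y; simp [h, mem_iInter]
      rw [this]
      exact MeasurableSet.compl <| MeasurableSet.iInter fun i =>
        measurableSet_le (measurable_pi_apply j') (measurable_pi_apply i)

lemma s19vol_two (k m : ℕ) (i j : Fin k) (hij : i ≠ j) (s : Fin (m+1)) :
    volume {x : Fin k → I | fm m (x i) = s ∧ fm m (x j) = s}
      = ((m+1:ℕ):ℝ≥0∞)⁻¹ * ((m+1:ℕ):ℝ≥0∞)⁻¹ := by
  classical
  set A : Set I := fm m ⁻¹' {s} with hA
  have hset : {x : Fin k → I | fm m (x i) = s ∧ fm m (x j) = s} =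
      Set.pi univ (Function.update (Function.update (fun _ : Fin k => (univ : Set I)) i A) j A) := by
    ext x
    simp only [mem_setOf_eq, Set.mem_pi, mem_univ, forall_true_left]
    constructor
    · rintro ⟨h1, h2⟩ l
      rcases eq_or_ne l j with rfl | hlj
      · simp [Function.update_self, hA, h2]
      rcases eq_or_ne l i with rfl | hli
      · simp [Function.update_of_ne hlj, Function.update_self, hA, h1]
      · simp [Function.update_of_ne hlj, Function.update_of_ne hli]
    · intro h
      constructor
      · have := h i
        rw [Function.update_of_ne hij, Function.update_self] at this
        simpa [hA] using this
      · have := h j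
        rw [Function.update_self] at this
        simpa [hA] using this
  rw [hset, volume_pi_pi]
  have hcomp : (fun l => volume ((Function.update (Function.update (fun _ : Fin k => (univ : Set I)) i A) j A) l))
      = Function.update (Function.update (fun _ : Fin k => volume (univ : Set I)) i (volume A)) j (volume A) := by
    funext l
    rcases eq_or_ne l j with rfl | hlj
    · simp
    rcases eq_or_ne l i with rfl | hli
    · simp [Function.update_of_ne hlj]
    · simp [Function.update_of_ne hlj, Function.update_of_ne hli]
  rw [hcomp]
  rw [Finset.prod_update_of_mem (Finset.mem_univ j)]
  rw [Finset.prod_update_of_mem (by simp [hij] : i ∈ Finset.univ \ {j})]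
  simp [vol_fm, hA]

lemma s19vol_pair (k m : ℕ) (i j : Fin k) (hij : i ≠ j) :
    volume {x : Fin k → I | fm m (x i) = fm m (x j)} ≤ ((m+1:ℕ):ℝ≥0∞)⁻¹ := by
  have hsub : {x : Fin k → I | fm m (x i) = fm m (x j)} ⊆
      ⋃ s : Fin (m+1), {x : Fin k → I | fm m (x i) = s ∧ fm m (x j) = s} := by
    intro x hx
    exact mem_iUnion.2 ⟨fm m (x j), hx, rfl⟩
  calc volume {x : Fin k → I | fm m (x i) = fm m (x j)}
      ≤ ∑' s : Fin (m+1), volume {x : Fin k → I | fm m (x i) = s ∧ fm m (x j) = s} :=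
        le_trans (measure_mono hsub) (measure_iUnion_le _)
    _ = ∑ s : Fin (m+1), ((m+1:ℕ):ℝ≥0∞)⁻¹ * ((m+1:ℕ):ℝ≥0∞)⁻¹ := by
        rw [tsum_fintype]; exact Finset.sum_congr rfl fun s _ => s19vol_two k m i j hij s
    _ = (m+1 : ℕ) * (((m+1:ℕ):ℝ≥0∞)⁻¹ * ((m+1:ℕ):ℝ≥0∞)⁻¹) := by
        simp [Finset.sum_const, Finset.card_univ]
    _ ≤ ((m+1:ℕ):ℝ≥0∞)⁻¹ := by
        rw [← mul_assoc, ENNReal.mul_inv_cancel (by exact_mod_cast Nat.succ_ne_zero m) (by simp),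
          one_mul]

lemma s19vol_D (k m : ℕ) :
    volume {x : Fin k → I | ¬ Function.Injective (fun i => fm m (x i))} ≤
      (k : ℝ≥0∞) * k * ((m+1:ℕ):ℝ≥0∞)⁻¹ := by
  classical
  have hsub : {x : Fin k → I | ¬ Function.Injective (fun i => fm m (x i))} ⊆
      ⋃ p : Fin k × Fin k, (if p.1 = p.2 then (∅ : Set (Fin k → I))
        else {x : Fin k → I | fm m (x p.1) = fm m (x p.2)}) := by
    intro x hx
    simp only [Function.Injective, not_forall] at hx
    obtain ⟨a, b, hab, hne⟩ := hx
    exact mem_iUnion.2 ⟨(a, b), by simp [hne, hab]⟩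
  calc volume _ ≤ ∑' p : Fin k × Fin k, volume (if p.1 = p.2 then (∅ : Set (Fin k → I))
        else {x : Fin k → I | fm m (x p.1) = fm m (x p.2)}) :=
        le_trans (measure_mono hsub) (measure_iUnion_le _)
    _ ≤ ∑' _ : Fin k × Fin k, ((m+1:ℕ):ℝ≥0∞)⁻¹ := by
        apply ENNReal.tsum_le_tsum
        intro p
        split_ifs with h
        · simp
        · exact s19vol_pair k m p.1 p.2 h
    _ = (k : ℝ≥0∞) * k * ((m+1:ℕ):ℝ≥0∞)⁻¹ := by
        rw [tsum_fintype]
        simp [Finset.sum_const, Finset.card_univ, mul_assoc]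

lemma s19vol_S0 (k m : ℕ) (hk : 2 ≤ k) :
    volume {x : Fin k → I | ∀ i, i ≠ (⟨0, by omega⟩ : Fin k) →
        fm m (x ⟨0, by omega⟩) < fm m (x i)} ≤ 1 / (k : ℝ≥0∞) := by
  classical
  set S : Fin k → Set (Fin k → I) :=
    fun j => {x : Fin k → I | ∀ i, i ≠ j → fm m (x j) < fm m (x i)} with hS
  have hmeas : ∀ j, MeasurableSet (S j) := by
    intro j
    have : S j = ⋂ i, ⋂ (_ : i ≠ j), {x : Fin k → I | fm m (x j) < fm m (x i)} := by
      ext x; simp [hS, mem_iInter]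
    rw [this]
    exact MeasurableSet.iInter fun i => MeasurableSet.iInter fun _ =>
      measurableSet_lt ((measurable_fm m).comp (measurable_pi_apply _))
        ((measurable_fm m).comp (measurable_pi_apply _))
  have hdisj : Pairwise (Function.onFun Disjoint S) := by
    intro a b hab
    simp only [Function.onFun]
    rw [Set.disjoint_left]
    intro x hxa hxb
    exact absurd ((hxa b hab.symm).trans (hxb a hab)) (lt_irrefl _)
  have hvol : ∀ j : Fin k, volume (S j) = volume (S (⟨0, by omega⟩ : Fin k)) := by
    intro j
    set i0 : Fin k := ⟨0, by omega⟩
    have : S j = (fun x : Fin k → I => fun i => x (Equiv.swap i0 j i)) ⁻¹' (S i0) := by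
      ext x
      simp only [hS, mem_preimage, mem_setOf_eq]
      rw [Equiv.swap_apply_left]
      constructor
      · intro h i hi
        refine h _ ?_
        intro hcon
        exact hi ((Equiv.swap i0 j).injective (hcon.trans (Equiv.swap_apply_left i0 j).symm))
      · intro h i hi
        have h2 := h (Equiv.swap i0 j i) ?_
        · rwa [Equiv.swap_apply_self] at h2
        · intro hcon
          exact hi ((Equiv.swap i0 j).injective (hcon.trans (Equiv.swap_apply_right i0 j).symm))
    rw [this, vol_perm k _ (hmeas i0)]
  have hsum : ∑' j : Fin k, volume (S j) = volume (⋃ j, S j) :=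
    (measure_iUnion hdisj hmeas).symm
  have hk1 : (k : ℝ≥0∞) * volume (S ⟨0, by omega⟩) ≤ 1 := by
    calc (k : ℝ≥0∞) * volume (S ⟨0, by omega⟩) = ∑' j : Fin k, volume (S j) := by
          rw [tsum_fintype]
          simp only [hvol]
          simp [Finset.sum_const, Finset.card_univ]
      _ = volume (⋃ j, S j) := hsum
      _ ≤ 1 := prob_le_one
  have hk0 : (k : ℝ≥0∞) ≠ 0 := by exact_mod_cast by omega
  rw [ENNReal.le_div_iff_mul_le (Or.inl hk0) (Or.inl (by simp))]
  rwa [mul_comm]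

/-- The finite-path threshold λ_{p,k} for the shift graph. -/
noncomputable def lamPK (k p : ℕ) (hk : 2 ≤ k) : ℝ≥0∞ :=
  ⨆ (g : (Fin (k - 1) → I) → Fin p) (_ : Measurable g),
    volume {x : Fin k → I |
      g (fun i => x (Fin.castLE (by omega) i)) >
      g (fun i => x ⟨i.1 + 1, by omega⟩)}

lemma s19no_strictanti {p : ℕ} (f : ℕ → Fin p) (h : StrictAnti f) : False := by
  have key : ∀ n, (f n : ℕ) + n ≤ f 0 := by
    intro n; induction n with
    | zero => simp
    | succ n ih =>
      have h2 : f (n + 1) < f n := h (Nat.lt_succ_self n)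
      have h3 : (f (n+1) : ℕ) < f n := h2
      omega
  have := key ((f 0) + 1); omega

open Fin.NatCast in
lemma s19upper (k p : ℕ) (hk : 2 ≤ k) : lamPK k p hk ≤ 1 - 1/(k:ℝ≥0∞) := by
  haveI : NeZero k := ⟨by omega⟩
  apply iSup_le; intro g; apply iSup_le; intro hg
  set W : (Fin k → I) → Fin k → Fin p :=
    fun x j => g (fun i => x (Fin.castLE (by omega : k-1 ≤ k) i + j)) with hW
  set A : Fin k → Set (Fin k → I) := fun j => {x | W x (j+1) < W x j} with hA
  have hmeasW : ∀ j, Measurable (fun x => W x j) := fun j =>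
    hg.comp (measurable_pi_lambda _ (fun i => measurable_pi_apply _))
  have hmeasA : ∀ j, MeasurableSet (A j) := fun j => measurableSet_lt (hmeasW _) (hmeasW _)
  have hA0 : {x : Fin k → I |
      g (fun i => x (Fin.castLE (by omega) i)) >
      g (fun i => x ⟨i.1 + 1, by omega⟩)} = A 0 := by
    ext x
    simp only [hA, mem_setOf_eq, hW]
    have e1 : (fun i : Fin (k-1) => x (Fin.castLE (by omega) i + (0:Fin k)))
        = fun i : Fin (k-1) => x (Fin.castLE (by omega) i) := by
      funext i; rw [add_zero]
    have e2 : (fun i : Fin (k-1) => x (Fin.castLE (by omega : k-1 ≤ k) i + (0+1:Fin k)))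
        = fun i : Fin (k-1) => x ⟨i.1 + 1, by omega⟩ := by
      funext i
      congr 1
      rw [zero_add]
      ext
      rw [Fin.add_def, Fin.coe_castLE]
      have hv1 : (1 : Fin k).1 = 1 := by
        rw [Fin.val_one']
        exact Nat.mod_eq_of_lt (by omega)
      rw [hv1]
      have := i.2
      exact Nat.mod_eq_of_lt (by omega)
    rw [e1, e2]
  have hAj : ∀ j, volume (A j) = volume (A 0) := by
    intro j
    have hWshift : ∀ (x : Fin k → I) (c : Fin k), W (fun i' => x (Equiv.addRight j i')) c = W x (c + j) := by
      intro x c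
      simp only [hW, Equiv.coe_addRight]
      congr 1
      funext i
      congr 1
      rw [add_assoc]
    have heq : A j = (fun x : Fin k → I => fun i => x (Equiv.addRight j i)) ⁻¹' (A 0) := by
      ext x
      simp only [hA, mem_preimage, mem_setOf_eq, hWshift]
      have h01 : (0:Fin k) + 1 + j = j + 1 := by rw [zero_add, add_comm]
      rw [h01, zero_add]
    rw [heq, vol_perm k _ (hmeasA 0)]
  have hcover : (univ : Set (Fin k → I)) ⊆ ⋃ j, (A j)ᶜ := by
    intro x _
    by_contra hx
    simp only [mem_iUnion, mem_compl_iff, not_exists, not_not] at hx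
    have hstrict : StrictAnti (fun n : ℕ => W x (n : Fin k)) := by
      apply strictAnti_nat_of_succ_lt
      intro n
      have : ((n+1 : ℕ) : Fin k) = (n : Fin k) + 1 := by push_cast; ring
      rw [this]
      exact hx (n : Fin k)
    exact s19no_strictanti _ hstrict
  have hone : (1 : ℝ≥0∞) ≤ (k : ℝ≥0∞) * (1 - volume (A 0)) := by
    calc (1:ℝ≥0∞) = volume (univ : Set (Fin k → I)) := measure_univ.symm
      _ ≤ volume (⋃ j, (A j)ᶜ) := measure_mono hcover
      _ ≤ ∑' j, volume ((A j)ᶜ) := measure_iUnion_le _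
      _ = ∑ j : Fin k, (1 - volume (A j)) := by
          rw [tsum_fintype]
          exact Finset.sum_congr rfl fun j _ => prob_compl_eq_one_sub (hmeasA j)
      _ = (k : ℝ≥0∞) * (1 - volume (A 0)) := by
          simp only [hAj]
          simp [Finset.sum_const, Finset.card_univ]
  rw [hA0]
  have hk0 : (k : ℝ≥0∞) ≠ 0 := by exact_mod_cast by omega
  have h1k : 1/(k:ℝ≥0∞) ≤ 1 - volume (A 0) := by
    calc 1/(k:ℝ≥0∞) = (k:ℝ≥0∞)⁻¹ * 1 := by rw [one_div, mul_one]
      _ ≤ (k:ℝ≥0∞)⁻¹ * ((k:ℝ≥0∞) * (1 - volume (A 0))) := mul_le_mul_right hone _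
      _ = 1 - volume (A 0) := by rw [← mul_assoc, ENNReal.inv_mul_cancel hk0 (by simp), one_mul]
  have hle1 : volume (A 0) ≤ 1 := prob_le_one
  have : volume (A 0) + 1/(k:ℝ≥0∞) ≤ 1 := by
    calc volume (A 0) + 1/(k:ℝ≥0∞) ≤ volume (A 0) + (1 - volume (A 0)) :=
          add_le_add_right h1k _
      _ = 1 := add_tsub_cancel_of_le hle1
  exact ENNReal.le_sub_of_add_le_right (by simp; omega) this

lemma s19inf'_amin {n : ℕ} (hn : 0 < n) (y : Fin n → I) :
    Finset.univ.inf' ⟨⟨0, hn⟩, Finset.mem_univ _⟩ y = y (s19amin hn y) := by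
  apply le_antisymm
  · exact Finset.inf'_le _ (Finset.mem_univ _)
  · exact Finset.le_inf' _ _ fun i _ => s19amin_le hn y i

noncomputable def s19g (k m : ℕ) (hk : 2 ≤ k) : (Fin (k-1) → I) → Fin ((k-1)*(m+1)) :=
  (fun pr : Fin (m+1) × Fin (k-1) =>
    (⟨pr.1.1 * (k-1) + pr.2.1, by
      have h1 := pr.1.2
      have h2 := pr.2.2
      have h3 : pr.1.1 * (k-1) ≤ m * (k-1) := Nat.mul_le_mul_right _ (by omega)
      have h4 : (m+1) * (k-1) = m*(k-1) + (k-1) := Nat.succ_mul _ _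
      have h5 : (k-1)*(m+1) = (m+1)*(k-1) := Nat.mul_comm _ _
      omega⟩ : Fin ((k-1)*(m+1)))) ∘
  (fun y => (fm m (y (s19amin (by omega : 0 < k-1) y)), s19amin (by omega : 0 < k-1) y))

lemma s19g_val (k m : ℕ) (hk : 2 ≤ k) (y : Fin (k-1) → I) :
    (s19g k m hk y).1 = (fm m (y (s19amin (by omega : 0 < k-1) y))).1 * (k-1)
      + (s19amin (by omega : 0 < k-1) y).1 := rfl

lemma s19measurable_g (k m : ℕ) (hk : 2 ≤ k) : Measurable (s19g k m hk) := by
  apply Measurable.comp (Measurable.of_discrete)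
  apply Measurable.prodMk
  · have h1 : (fun y : Fin (k-1) → I => y (s19amin (by omega : 0 < k-1) y))
        = fun y => Finset.univ.inf' ⟨⟨0, by omega⟩, Finset.mem_univ _⟩ y := by
      funext y; exact (s19inf'_amin _ y).symm
    exact (measurable_fm m).comp (h1 ▸ measurable_finset_inf' (k-1) _ _)
  · exact s19measurable_amin _

lemma s19key (k m : ℕ) (hk : 2 ≤ k) :
    {x : Fin k → I | Function.Injective fun i => fm m (x i)} \
      {x : Fin k → I | ∀ i, i ≠ (⟨0, by omega⟩ : Fin k) → fm m (x ⟨0, by omega⟩) < fm m (x i)} ⊆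
    {x : Fin k → I |
      s19g k m hk (fun i => x (Fin.castLE (by omega) i)) >
      s19g k m hk (fun i => x ⟨i.1 + 1, by omega⟩)} := by
  intro x hx
  obtain ⟨hxD, hxS0⟩ := hx
  simp only [mem_setOf_eq] at hxD hxS0 ⊢
  set i0 : Fin k := ⟨0, by omega⟩ with hi0
  have hn : 0 < k - 1 := by omega
  have hxinj : Function.Injective x := fun a b hab => hxD (congrArg (fm m) hab)
  obtain ⟨js, -, hjs⟩ := Finset.exists_min_image Finset.univ x ⟨i0, Finset.mem_univ _⟩
  have hjs' : ∀ i, x js ≤ x i := fun i => hjs i (Finset.mem_univ i)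
  have hjsu : ∀ i, i ≠ js → x js < x i :=
    fun i hi => lt_of_le_of_ne (hjs' i) (fun hcon => hi (hxinj hcon.symm))
  have hjs0 : js ≠ i0 := by
    intro hcon
    apply hxS0
    intro i hi
    have hlt : x i0 < x i := by
      rw [← hcon]
      exact hjsu i (by rw [hcon]; exact hi)
    have hle : fm m (x i0) ≤ fm m (x i) := fm_mono m hlt.le
    exact lt_of_le_of_ne hle (fun h => hi (hxD h).symm)
  have hjsv : 0 < js.1 := by
    rcases Nat.eq_zero_or_pos js.1 with h | h
    · exact absurd (Fin.ext h : js = i0) hjs0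
    · exact h
  set y0 : Fin (k-1) → I := fun i => x (Fin.castLE (by omega) i) with hy0
  set y1 : Fin (k-1) → I := fun i => x ⟨i.1+1, by omega⟩ with hy1
  show s19g k m hk y1 < s19g k m hk y0
  rw [Fin.lt_def, s19g_val, s19g_val]
  rcases Nat.lt_or_ge js.1 (k-1) with hcase | hcase
  -- Case A : the global min is in both windows
  · set j0 : Fin (k-1) := ⟨js.1, hcase⟩ with hj0
    set j1 : Fin (k-1) := ⟨js.1 - 1, by omega⟩ with hj1
    have hc0 : Fin.castLE (by omega : k-1 ≤ k) j0 = js := by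
      ext; rfl
    have hy0j0 : y0 j0 = x js := by rw [hy0]; simp only; rw [hc0]
    have ha0 : s19amin hn y0 = j0 := by
      apply s19amin_eq
      intro i hi
      rw [hy0j0]
      apply hjsu
      intro hcon
      apply hi
      ext
      have : (Fin.castLE (by omega : k-1 ≤ k) i).1 = js.1 := by rw [hcon]
      simpa using this
    have hy1j1 : y1 j1 = x js := by
      rw [hy1]; simp only
      congr 1
      ext
      simp only [hj1]
      omega
    have ha1 : s19amin hn y1 = j1 := by
      apply s19amin_eq
      intro i hi
      rw [hy1j1]
      apply hjsu
      intro hcon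
      apply hi
      have : i.1 + 1 = js.1 := by
        have := congrArg Fin.val hcon
        simpa using this
      ext
      simp only [hj1]
      omega
    rw [ha0, ha1, hy0j0, hy1j1]
    simp only [hj0, hj1]
    omega
  -- Case B : the global min is the last coordinate
  · have hjsl : js.1 = k - 1 := by omega
    set a0 := s19amin hn y0 with ha0d
    set a1 := s19amin hn y1 with ha1d
    have hy1min : y1 a1 = x js := by
      apply le_antisymm
      · have h1 : y1 (⟨k-2, by omega⟩ : Fin (k-1)) = x js := by
          rw [hy1]; simp only
          congr 1
          ext
          simp only
          omega
        calc y1 a1 ≤ y1 ⟨k-2, by omega⟩ := s19amin_le hn y1 _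
          _ = x js := h1
      · rw [hy1]; exact hjs' _
    have hcne : Fin.castLE (by omega : k-1 ≤ k) a0 ≠ js := by
      intro hcon
      have := congrArg Fin.val hcon
      simp only [Fin.coe_castLE] at this
      have := a0.2
      omega
    have hgt : x js < y0 a0 := by
      rw [hy0]
      exact hjsu _ hcne
    have hlev : fm m (x js) < fm m (y0 a0) := by
      apply lt_of_le_of_ne (fm_mono m hgt.le)
      intro h
      exact hcne (hxD h).symm
    rw [hy1min]
    have hlevv : (fm m (x js)).1 < (fm m (y0 a0)).1 := hlev
    have e1 : ((fm m (x js)).1 + 1) * (k-1) ≤ (fm m (y0 a0)).1 * (k-1) :=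
      Nat.mul_le_mul_right _ (by omega)
    have e2 : ((fm m (x js)).1 + 1) * (k-1) = (fm m (x js)).1 * (k-1) + (k-1) :=
      Nat.succ_mul _ _
    have := a1.2
    have := a0.2
    omega

lemma s19measD (k m : ℕ) :
    MeasurableSet {x : Fin k → I | Function.Injective fun i => fm m (x i)} := by
  have : {x : Fin k → I | Function.Injective fun i => fm m (x i)} =
      ⋂ (a : Fin k) (b : Fin k),
        {x : Fin k → I | fm m (x a) = fm m (x b) → a = b} := by
    ext x
    simp only [mem_setOf_eq, mem_iInter, Function.Injective]
  rw [this]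
  refine MeasurableSet.iInter fun a => MeasurableSet.iInter fun b => ?_
  by_cases hab : a = b
  · have : {x : Fin k → I | fm m (x a) = fm m (x b) → a = b} = univ := by
      ext x; simp [hab]
    rw [this]; exact MeasurableSet.univ
  · have : {x : Fin k → I | fm m (x a) = fm m (x b) → a = b}
        = {x : Fin k → I | fm m (x a) = fm m (x b)}ᶜ := by
      ext x; simp [hab]
    rw [this]
    exact (measurableSet_eq_fun ((measurable_fm m).comp (measurable_pi_apply a))
      ((measurable_fm m).comp (measurable_pi_apply b))).compl

lemma s19measS0 (k m : ℕ) (hk : 2 ≤ k) :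
    MeasurableSet {x : Fin k → I | ∀ i, i ≠ (⟨0, by omega⟩ : Fin k) →
        fm m (x ⟨0, by omega⟩) < fm m (x i)} := by
  have : {x : Fin k → I | ∀ i, i ≠ (⟨0, by omega⟩ : Fin k) →
        fm m (x ⟨0, by omega⟩) < fm m (x i)} =
      ⋂ (i : Fin k) (_ : i ≠ (⟨0, by omega⟩ : Fin k)),
        {x : Fin k → I | fm m (x ⟨0, by omega⟩) < fm m (x i)} := by
    ext x; simp [mem_iInter]
  rw [this]
  exact MeasurableSet.iInter fun i => MeasurableSet.iInter fun _ =>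
    measurableSet_lt ((measurable_fm m).comp (measurable_pi_apply _))
      ((measurable_fm m).comp (measurable_pi_apply _))

lemma s19lower (k m : ℕ) (hk : 2 ≤ k) :
    1 - 1/(k:ℝ≥0∞) - (k:ℝ≥0∞)*k*((m+1:ℕ):ℝ≥0∞)⁻¹ ≤ lamPK k ((k-1)*(m+1)) hk := by
  set D := {x : Fin k → I | Function.Injective fun i => fm m (x i)} with hD
  set S0 := {x : Fin k → I | ∀ i, i ≠ (⟨0, by omega⟩ : Fin k) →
    fm m (x ⟨0, by omega⟩) < fm m (x i)} with hS0
  have h1 : volume (D \ S0) ≤ lamPK k ((k-1)*(m+1)) hk := by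
    refine le_trans (measure_mono (s19key k m hk)) ?_
    exact le_iSup₂ (f := fun g (_ : Measurable g) => volume {x : Fin k → I |
      g (fun i => x (Fin.castLE (by omega) i)) > g (fun i => x ⟨i.1 + 1, by omega⟩)})
      (s19g k m hk) (s19measurable_g k m hk)
  have h2 : 1 - (k:ℝ≥0∞)*k*((m+1:ℕ):ℝ≥0∞)⁻¹ ≤ volume D := by
    have hDc : volume Dᶜ ≤ (k:ℝ≥0∞)*k*((m+1:ℕ):ℝ≥0∞)⁻¹ := by
      have : Dᶜ = {x : Fin k → I | ¬ Function.Injective (fun i => fm m (x i))} := by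
        rw [hD, compl_setOf]
      rw [this]
      exact s19vol_D k m
    have hunion : (1:ℝ≥0∞) ≤ volume D + volume Dᶜ := by
      calc (1:ℝ≥0∞) = volume (univ : Set (Fin k → I)) := measure_univ.symm
        _ = volume (D ∪ Dᶜ) := by rw [union_compl_self]
        _ ≤ volume D + volume Dᶜ := measure_union_le _ _
    exact tsub_le_iff_right.mpr (hunion.trans (add_le_add_right hDc _))
  have h3 : volume S0 ≤ 1/(k:ℝ≥0∞) := s19vol_S0 k m hk
  calc 1 - 1/(k:ℝ≥0∞) - (k:ℝ≥0∞)*k*((m+1:ℕ):ℝ≥0∞)⁻¹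
      = 1 - (k:ℝ≥0∞)*k*((m+1:ℕ):ℝ≥0∞)⁻¹ - 1/(k:ℝ≥0∞) := tsub_right_comm
    _ ≤ volume D - volume S0 := tsub_le_tsub h2 h3
    _ ≤ volume (D \ S0) := le_measure_diff
    _ ≤ lamPK k ((k-1)*(m+1)) hk := h1

lemma s19mono (k : ℕ) (hk : 2 ≤ k) : Monotone (fun p => lamPK k p hk) := by
  intro p q hpq
  simp only [lamPK]
  apply iSup_le; intro g; apply iSup_le; intro hg
  have hgq : Measurable ((Fin.castLE hpq) ∘ g) := Measurable.comp .of_discrete hg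
  refine le_trans ?_ (le_iSup₂ (f := fun g (_ : Measurable g) => volume {x : Fin k → I |
      g (fun i => x (Fin.castLE (by omega) i)) > g (fun i => x ⟨i.1 + 1, by omega⟩)})
      ((Fin.castLE hpq) ∘ g) hgq)
  apply le_of_eq
  have hset : {x : Fin k → I |
      g (fun i => x (Fin.castLE (by omega) i)) > g (fun i => x ⟨i.1 + 1, by omega⟩)} =
      {x : Fin k → I |
      (Fin.castLE hpq ∘ g) (fun i => x (Fin.castLE (by omega) i)) >
      (Fin.castLE hpq ∘ g) (fun i => x ⟨i.1 + 1, by omega⟩)} := by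
    ext x
    simp only [mem_setOf_eq, Function.comp_apply, gt_iff_lt, Fin.lt_def, Fin.coe_castLE]
  rw [hset]

/-- λ_{p,k} is nondecreasing in p and tends to 1 - 1/k as p → ∞. -/
theorem stmt_19 (k : ℕ) (hk : 2 ≤ k) :
    (∀ p q : ℕ, 1 ≤ p → p ≤ q → lamPK k p hk ≤ lamPK k q hk) ∧
      Tendsto (fun p => lamPK k p hk) atTop (nhds (1 - 1 / (k : ℝ≥0∞))) := by
  constructor
  · intro p q _ hpq
    exact s19mono k hk hpq
  · have htend := tendsto_atTop_iSup (s19mono k hk)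
    have heq : (⨆ p, lamPK k p hk) = 1 - 1/(k:ℝ≥0∞) := by
      apply le_antisymm
      · exact iSup_le fun p => s19upper k p hk
      · apply ENNReal.le_of_forall_pos_le_add
        intro ε hε hfin
        set N := ⌈((k*k : ℕ) : ℝ≥0) / ε⌉₊ with hN
        have hcN : ((k*k:ℕ) : ℝ≥0) ≤ ε * (N+1) := by
          rw [hN]
          have h1 : ((k*k:ℕ) : ℝ≥0) / ε ≤ (⌈((k*k : ℕ) : ℝ≥0) / ε⌉₊ : ℝ≥0) := Nat.le_ceil _
          have h2 : (⌈((k*k : ℕ) : ℝ≥0) / ε⌉₊ : ℝ≥0) ≤ (⌈((k*k : ℕ) : ℝ≥0) / ε⌉₊ : ℝ≥0) + 1 :=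
            le_self_add
          rw [div_le_iff₀ hε] at h1
          calc ((k*k:ℕ) : ℝ≥0) ≤ (⌈((k*k : ℕ) : ℝ≥0) / ε⌉₊ : ℝ≥0) * ε := h1
            _ ≤ ((⌈((k*k : ℕ) : ℝ≥0) / ε⌉₊ : ℝ≥0) + 1) * ε := by
                exact mul_le_mul_of_nonneg_right h2 zero_le
            _ = ε * ((⌈((k*k : ℕ) : ℝ≥0) / ε⌉₊ : ℝ≥0) + 1) := mul_comm _ _
        have hcE : (k:ℝ≥0∞)*k*((N+1:ℕ):ℝ≥0∞)⁻¹ ≤ (ε : ℝ≥0∞) := by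
          have hN1 : ((N+1:ℕ):ℝ≥0∞) ≠ 0 := by exact_mod_cast Nat.succ_ne_zero N
          have hN2 : ((N+1:ℕ):ℝ≥0∞) ≠ ∞ := by simp
          have hcast : (k:ℝ≥0∞)*k ≤ (ε : ℝ≥0∞) * ((N+1:ℕ):ℝ≥0∞) := by
            have := ENNReal.coe_le_coe.2 hcN
            push_cast at this ⊢
            convert this using 2 <;> push_cast <;> ring
          calc (k:ℝ≥0∞)*k*((N+1:ℕ):ℝ≥0∞)⁻¹
              ≤ ((ε : ℝ≥0∞) * ((N+1:ℕ):ℝ≥0∞))*((N+1:ℕ):ℝ≥0∞)⁻¹ :=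
                mul_le_mul_left hcast _
            _ = (ε : ℝ≥0∞) := by
                rw [mul_assoc, ENNReal.mul_inv_cancel hN1 hN2, mul_one]
        have hlow := s19lower k N hk
        have hsup : lamPK k ((k-1)*(N+1)) hk ≤ ⨆ p, lamPK k p hk :=
          le_iSup (fun p => lamPK k p hk) ((k-1)*(N+1))
        have h5 : 1 - 1/(k:ℝ≥0∞) ≤ (⨆ p, lamPK k p hk) + (k:ℝ≥0∞)*k*((N+1:ℕ):ℝ≥0∞)⁻¹ := by
          rw [← tsub_le_iff_right]
          exact hlow.trans hsup
        exact h5.trans (add_le_add_right hcE _)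
    rwa [heq] at htend
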